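/- Drop-k risk-neutral digits: fix n ≥ 1 and suppose f_n = f_n^{drop}, the measures Q satisfy the product form with conditional digits q and the martingale condition Q_n({a'}) = c₁Q_{n+1}(I_n(1,a')) + c₀Q_{n+1}(I_n(0,a')) for all a' ∈ B_n. Then for a ∈ B_{n-1} with Q_{n-1}({a}) ≠ 0: q_n(a1) = 0, q_n(a0) = 1, q_{n+1}(a01) = 1/2 + (r−μ)/(2σ), and q_{n+1}(a00) = 1/2 − (r−μ)/(2σ). -/
import Mathlib


/-- The binomial sample space at time `n`: binary words of length `n`. -/
abbrev Bn (n : ℕ) := Fin n → Bool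

/-- The prefix of length `k` of a word of length `n ≥ k`. -/
def pre {n : ℕ} (k : ℕ) (h : k ≤ n) (a : Bn n) : Bn k := fun i => a (Fin.castLE h i)

/-- The drop map `f_m^{drop}(d₁…d_{m-1}d_m d_{m+1}) = d₁…d_{m-1}0`. -/
def fDrop (m : ℕ) : Bn (m + 1) → Bn m :=
  fun d i => if (i : ℕ) + 1 = m then false else d i.castSucc

/-- `I_m(j, a)`: elements of the preimage of `a` under `f` whose last digit is `j`. -/
def In (m : ℕ) (f : Bn (m + 1) → Bn m) (j : Bool) (a : Bn m) : Finset (Bn (m + 1)) :=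
  Finset.univ.filter (fun e => f e = a ∧ e (Fin.last m) = j)

lemma fDrop_apply_ne {m : ℕ} (d : Bn (m+1)) (i : Fin m) (h : (i : ℕ) + 1 ≠ m) :
    fDrop m d i = d i.castSucc := if_neg h

lemma fDrop_apply_eq {m : ℕ} (d : Bn (m+1)) (i : Fin m) (h : (i : ℕ) + 1 = m) :
    fDrop m d i = false := if_pos h

lemma pre_snoc {m k : ℕ} (hk : k ≤ m) (h' : k ≤ m + 1) (a : Bn m) (b : Bool) :
    pre k h' (Fin.snoc a b) = pre k hk a := by
  funext i
  show (Fin.snoc a b : Bn (m+1)) (Fin.castLE h' i) = a (Fin.castLE hk i)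
  have h : (Fin.castLE h' i : Fin (m+1)) = Fin.castSucc (Fin.castLE hk i) := Fin.ext rfl
  rw [h, Fin.snoc_castSucc]

lemma pre_self {m : ℕ} (h : m ≤ m) (a : Bn m) : pre m h a = a := by
  funext i; exact congrArg a (Fin.ext rfl)

/-- Drop-`k` risk-neutral digits: with `f_n = f_n^{drop}` (here the paper's
time `n ≥ 1` is `n+1`), the product form and the martingale condition force
`q_n(a1) = 0`, `q_n(a0) = 1`, `q_{n+1}(a01) = 1/2 + (r-μ)/(2σ)` and
`q_{n+1}(a00) = 1/2 - (r-μ)/(2σ)` wherever `Q_{n-1}({a}) ≠ 0`. -/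
theorem dropk_risk_neutral_digits
    (μ σ r : ℝ) (hσ : σ > 0) (hr : r > -1) (hμr : |μ - r| < σ)
    (Q : ∀ m, Bn m → ℝ) (q : ∀ k, Bn k → ℝ)
    -- product form of the measures
    (hprod : ∀ m (a : Bn m),
      Q m a = ∏ k : Fin m, q (k.val + 1) (pre (k.val + 1) k.isLt a))
    -- the `q`'s are conditional probabilities
    (hcond : ∀ m (a : Bn m),
      q (m + 1) (Fin.snoc a false) + q (m + 1) (Fin.snoc a true) = 1)
    (n : ℕ)
    -- martingale condition at the drop step (paper's time `n` = `n+1` here)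
    (hmart : ∀ a' : Bn (n + 1),
      Q (n + 1) a'
        = ((1 + μ + σ) / (1 + r)) * (∑ e ∈ In (n + 1) (fDrop (n + 1)) true a', Q (n + 2) e)
        + ((1 + μ - σ) / (1 + r)) * (∑ e ∈ In (n + 1) (fDrop (n + 1)) false a', Q (n + 2) e)) :
    ∀ a : Bn n, Q n a ≠ 0 →
      q (n + 1) (Fin.snoc a true) = 0 ∧
      q (n + 1) (Fin.snoc a false) = 1 ∧
      q (n + 2) (Fin.snoc (Fin.snoc a false) true) = 1 / 2 + (r - μ) / (2 * σ) ∧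
      q (n + 2) (Fin.snoc (Fin.snoc a false) false) = 1 / 2 - (r - μ) / (2 * σ) := by
  -- recursion for Q
  have Qsucc : ∀ m (c : Bn m) (b : Bool),
      Q (m+1) (Fin.snoc c b) = Q m c * q (m+1) (Fin.snoc c b) := by
    intro m c b
    rw [hprod (m+1), hprod m, Fin.prod_univ_castSucc]
    have h2 : q ((Fin.last m).val + 1) (pre ((Fin.last m).val + 1) (Fin.last m).isLt
        (Fin.snoc c b)) = q (m+1) (Fin.snoc c b) :=
      congrArg (q (m+1)) (pre_self (Fin.last m).isLt (Fin.snoc c b))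
    rw [h2]
    congr 1
    refine Finset.prod_congr rfl fun k _ => ?_
    exact congrArg (q (k.val+1)) (pre_snoc k.isLt (Fin.castSucc k).isLt c b)
  -- preimage of snoc c true is empty
  have hIempty : ∀ (j : Bool) (c : Bn n),
      In (n+1) (fDrop (n+1)) j (Fin.snoc c true) = ∅ := by
    intro j c
    apply Finset.eq_empty_of_forall_notMem
    intro e he
    simp only [In, Finset.mem_filter, Finset.mem_univ, true_and] at he
    have h := congrFun he.1 (Fin.last n)
    rw [fDrop_apply_eq e (Fin.last n) rfl, Fin.snoc_last] at h
    exact Bool.noConfusion h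
  -- preimage of snoc c false is a pair
  have hIpair : ∀ (j : Bool) (c : Bn n),
      In (n+1) (fDrop (n+1)) j (Fin.snoc c false)
        = {Fin.snoc (Fin.snoc c false) j, Fin.snoc (Fin.snoc c true) j} := by
    intro j c
    ext e
    simp only [In, Finset.mem_filter, Finset.mem_univ, true_and, Finset.mem_insert,
      Finset.mem_singleton]
    constructor
    · rintro ⟨h1, h2⟩
      have key : e = Fin.snoc (Fin.snoc c (e (Fin.castSucc (Fin.last n)))) j := by
        funext i
        refine Fin.lastCases ?_ (fun i' => ?_) i
        · rw [Fin.snoc_last]; exact h2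
        · rw [Fin.snoc_castSucc]
          refine Fin.lastCases ?_ (fun i'' => ?_) i'
          · rw [Fin.snoc_last]
          · rw [Fin.snoc_castSucc]
            have h3 := congrFun h1 (Fin.castSucc i'')
            rw [fDrop_apply_ne e (Fin.castSucc i'')
                (Nat.ne_of_lt (Nat.succ_lt_succ i''.isLt)),
              Fin.snoc_castSucc] at h3
            exact h3
      cases hb : e (Fin.castSucc (Fin.last n)) with
      | false => left; rw [key, hb]
      | true => right; rw [key, hb]
    · have gen : ∀ b : Bool,
          fDrop (n+1) (Fin.snoc (Fin.snoc c b) j) = Fin.snoc c false ∧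
          (Fin.snoc (Fin.snoc c b) j : Bn (n+2)) (Fin.last (n+1)) = j := by
        intro b
        refine ⟨?_, Fin.snoc_last ..⟩
        funext i
        refine Fin.lastCases ?_ (fun i' => ?_) i
        · rw [fDrop_apply_eq _ (Fin.last n) rfl, Fin.snoc_last]
        · rw [Fin.snoc_castSucc,
            fDrop_apply_ne _ (Fin.castSucc i') (Nat.ne_of_lt (Nat.succ_lt_succ i'.isLt)),
            Fin.snoc_castSucc, Fin.snoc_castSucc]
      rintro (h | h) <;> rw [h] <;> exact gen _
  -- distinctness of the pair elements
  have hne : ∀ (j : Bool) (c : Bn n),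
      (Fin.snoc (Fin.snoc c false) j : Bn (n+2)) ≠ Fin.snoc (Fin.snoc c true) j := by
    intro j c h
    have h2 := congrFun h (Fin.castSucc (Fin.last n))
    rw [Fin.snoc_castSucc, Fin.snoc_castSucc, Fin.snoc_last, Fin.snoc_last] at h2
    exact Bool.noConfusion h2
  intro a ha
  -- step 1: q_{n+1}(a1) = 0
  have hQt : Q (n+1) (Fin.snoc a true) = 0 := by
    have h := hmart (Fin.snoc a true)
    rw [hIempty true a, hIempty false a] at h
    simpa using h
  have hqT : q (n+1) (Fin.snoc a true) = 0 := by
    have h := Qsucc n a true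
    rw [hQt] at h
    rcases mul_eq_zero.mp h.symm with h' | h'
    · exact absurd h' ha
    · exact h'
  have hqF : q (n + 1) (Fin.snoc a false) = 1 := by
    have h := hcond n a
    rw [hqT] at h
    linarith
  -- step 2: the drop-step equation
  have hQf : Q (n+1) (Fin.snoc a false) = Q n a := by
    rw [Qsucc, hqF, mul_one]
  have hQt2 : ∀ j : Bool, Q (n+2) (Fin.snoc (Fin.snoc a true) j) = 0 := by
    intro j
    rw [Qsucc (n+1) (Fin.snoc a true) j, hQt, zero_mul]
  have hQf2 : ∀ j : Bool, Q (n+2) (Fin.snoc (Fin.snoc a false) j)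
      = Q n a * q (n+2) (Fin.snoc (Fin.snoc a false) j) := by
    intro j
    rw [Qsucc (n+1) (Fin.snoc a false) j, hQf]
  have hmf := hmart (Fin.snoc a false)
  rw [hIpair true a, hIpair false a, Finset.sum_pair (hne true a),
    Finset.sum_pair (hne false a), hQf, hQt2, hQt2, hQf2, hQf2] at hmf
  set x := q (n+2) (Fin.snoc (Fin.snoc a false) true) with hxdef
  set y := q (n+2) (Fin.snoc (Fin.snoc a false) false) with hydef
  have hxy : y + x = 1 := hcond (n+1) (Fin.snoc a false)
  -- divide by Q n a
  have key : (1 + μ + σ) / (1 + r) * x + (1 + μ - σ) / (1 + r) * y = 1 := by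
    have h2 : Q n a * ((1 + μ + σ) / (1 + r) * x + (1 + μ - σ) / (1 + r) * y)
        = Q n a * 1 := by
      rw [mul_one]; linear_combination -hmf
    exact mul_left_cancel₀ ha h2
  have h1r : (1:ℝ) + r ≠ 0 := by linarith
  have hσ' : σ ≠ 0 := ne_of_gt hσ
  have hy' : y = 1 - x := by linarith
  rw [hy'] at key
  have hx : x = 1 / 2 + (r - μ) / (2 * σ) := by
    field_simp at key ⊢
    nlinarith [key]
  have hyv : y = 1 / 2 - (r - μ) / (2 * σ) := by
    rw [hy', hx]; ring
  exact ⟨hqT, hqF, hx, hyv⟩
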